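/- For all w,w1,w2,w3 ∈ G(d) one has ∇̃_w(R(w1,w2)w3) − R(∇̃_w w1, w2)w3 − R(w1, ∇̃_w w2)w3 − R(w1,w2)(∇̃_w w3) = 0; that is, the curvature tensor R is parallel with respect to the connection ∇̃ (∇̃R = 0). -/

import Mathlib

/-!
For `w = x + ℓ(h)` the map `∇̃_w` is the infinitesimal action of `h` on `G(d) = d ⊕ h*`: by the
derivation `π(h)` on `d` and by the coadjoint action `α ↦ ℓ[h, ℓ⁻¹α]` on `h*`. Since `π(h)` is a
skew-symmetric derivation and `π` is a homomorphism, `β` is `h`-equivariant, so `∇̃_w` is a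
derivation both of the bracket of `G(d)` and of the product `(u, v) ↦ ∇_u v`. An additive map that
is a derivation of a biadditive product and of a bracket is a derivation of the curvature
built from them, and this is `∇̃R = 0`.
-/

open Module

variable {H D : Type} [LieRing H] [LieAlgebra ℝ H] [FiniteDimensional ℝ H]
  [LieRing D] [LieAlgebra ℝ D] [FiniteDimensional ℝ D]

/-- `beta BD π x y` is the element `β(x,y)` of `h*` given by `a ↦ ⟨π(a)x, y⟩_d`. -/
def beta (BD : LinearMap.BilinForm ℝ D) (π : H →ₗ[ℝ] D →ₗ[ℝ] D) (x y : D) : Dual ℝ H :=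
  (BD.flip y).comp (π.flip x)

/-- The bracket on `G(d) = d ⊕ h*`: `[x₁+α₁, x₂+α₂] = [x₁,x₂]_d + β(x₁,x₂)`. -/
def gbr (BD : LinearMap.BilinForm ℝ D) (π : H →ₗ[ℝ] D →ₗ[ℝ] D)
    (u v : D × Dual ℝ H) : D × Dual ℝ H :=
  (⁅u.1, v.1⁆, beta BD π u.1 v.1)

/-- The inverse of the isomorphism `ℓ : h → h*`, `ℓ(h) = ⟨h,·⟩_h`. -/
noncomputable def ellInv (BH : LinearMap.BilinForm ℝ H) (hBH : BH.Nondegenerate)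
    (α : Dual ℝ H) : H :=
  (LinearMap.BilinForm.toDual BH hBH).symm α

/-- The Levi-Civita connection
`∇_{x₁+ℓ(h₁)}(x₂+ℓ(h₂)) = ½([x₁,x₂]_d + β(x₁,x₂) − π(h₁)x₂ − π(h₂)x₁)`. -/
noncomputable def nabG (BH : LinearMap.BilinForm ℝ H) (hBH : BH.Nondegenerate)
    (BD : LinearMap.BilinForm ℝ D) (π : H →ₗ[ℝ] D →ₗ[ℝ] D)
    (u v : D × Dual ℝ H) : D × Dual ℝ H :=
  ((2⁻¹ : ℝ) • (⁅u.1, v.1⁆ - π (ellInv BH hBH u.2) v.1 - π (ellInv BH hBH v.2) u.1),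
   (2⁻¹ : ℝ) • beta BD π u.1 v.1)

/-- The curvature `R(w₁,w₂)w₃ = ∇_{w₁}∇_{w₂}w₃ − ∇_{w₂}∇_{w₁}w₃ − ∇_{[w₁,w₂]}w₃`. -/
noncomputable def Rfun (BH : LinearMap.BilinForm ℝ H) (hBH : BH.Nondegenerate)
    (BD : LinearMap.BilinForm ℝ D) (π : H →ₗ[ℝ] D →ₗ[ℝ] D)
    (w₁ w₂ w₃ : D × Dual ℝ H) : D × Dual ℝ H :=
  nabG BH hBH BD π w₁ (nabG BH hBH BD π w₂ w₃)
    - nabG BH hBH BD π w₂ (nabG BH hBH BD π w₁ w₃)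
    - nabG BH hBH BD π (gbr BD π w₁ w₂) w₃

/-- The connection `∇̃ = T − ∇`: `∇̃_{x₁+ℓ(h₁)}(x₂+ℓ(h₂)) = π(h₁)x₂ + ℓ([h₁,h₂]_h)`. -/
noncomputable def tnab (BH : LinearMap.BilinForm ℝ H) (hBH : BH.Nondegenerate)
    (π : H →ₗ[ℝ] D →ₗ[ℝ] D) (u v : D × Dual ℝ H) : D × Dual ℝ H :=
  (π (ellInv BH hBH u.2) v.1, BH ⁅ellInv BH hBH u.2, ellInv BH hBH v.2⁆)

section Curvature

variable {V : Type*} [AddCommGroup V]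

def IsDerivationOf (δ : V → V) (mul : V → V → V) : Prop :=
  ∀ u v, δ (mul u v) = mul (δ u) v + mul u (δ v)

def curvature (nab br : V → V → V) (u v w : V) : V :=
  nab u (nab v w) - nab v (nab u w) - nab (br u v) w

theorem map_curvature_of_isDerivationOf {nab br : V → V → V} {δ : V →+ V}
    (nab_add_left : ∀ a b c, nab (a + b) c = nab a c + nab b c)
    (nab_add_right : ∀ a b c, nab a (b + c) = nab a b + nab a c)
    (hnab : IsDerivationOf δ nab) (hbr : IsDerivationOf δ br) (u v w : V) :
    δ (curvature nab br u v w) = curvature nab br (δ u) v w + curvature nab br u (δ v) w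
      + curvature nab br u v (δ w) := by
  rw [IsDerivationOf] at hnab hbr
  simp only [curvature, map_sub, hnab, hbr, nab_add_left, nab_add_right]
  abel

end Curvature

section ellInv

variable (BH : LinearMap.BilinForm ℝ H) (hBH : BH.Nondegenerate)

theorem ellInv_apply_self (x : H) : ellInv BH hBH (BH x) = x :=
  (LinearMap.BilinForm.toDual BH hBH).symm_apply_apply x

theorem apply_ellInv (α : Dual ℝ H) (a : H) : BH (ellInv BH hBH α) a = α a :=
  LinearMap.BilinForm.apply_toDual_symm_apply α a

theorem ellInv_add (α β : Dual ℝ H) :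
    ellInv BH hBH (α + β) = ellInv BH hBH α + ellInv BH hBH β :=
  map_add _ α β

theorem ellInv_smul (c : ℝ) (α : Dual ℝ H) : ellInv BH hBH (c • α) = c • ellInv BH hBH α :=
  map_smul _ c α

end ellInv

section beta

variable (BD : LinearMap.BilinForm ℝ D) (π : H →ₗ[ℝ] D →ₗ[ℝ] D)

omit [FiniteDimensional ℝ H] [FiniteDimensional ℝ D] in
theorem beta_apply (x y : D) (a : H) : beta BD π x y a = BD (π a x) y := rfl

omit [FiniteDimensional ℝ H] [FiniteDimensional ℝ D] in
theorem beta_add_left (x y z : D) : beta BD π (x + y) z = beta BD π x z + beta BD π y z :=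
  LinearMap.ext fun _ => by simp [beta_apply]

omit [FiniteDimensional ℝ H] [FiniteDimensional ℝ D] in
theorem beta_add_right (x y z : D) : beta BD π x (y + z) = beta BD π x y + beta BD π x z :=
  LinearMap.ext fun _ => by simp [beta_apply]

omit [FiniteDimensional ℝ H] [FiniteDimensional ℝ D] in
theorem rep_lie_apply (hπhom : ∀ a b : H, π ⁅a, b⁆ = π a ∘ₗ π b - π b ∘ₗ π a) (a b : H) (x : D) :
    π ⁅a, b⁆ x = π a (π b x) - π b (π a x) := by
  rw [hπhom]; rfl

omit [FiniteDimensional ℝ D] in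
theorem beta_equivariant (BH : LinearMap.BilinForm ℝ H) (hBH : BH.Nondegenerate)
    (hBHinv : ∀ a b c : H, BH ⁅a, b⁆ c = - BH b ⁅a, c⁆)
    (hπhom : ∀ a b : H, π ⁅a, b⁆ = π a ∘ₗ π b - π b ∘ₗ π a)
    (hπskew : ∀ a : H, ∀ x y : D, BD (π a x) y = - BD x (π a y)) (h : H) (x y : D) :
    BH ⁅h, ellInv BH hBH (beta BD π x y)⁆ = beta BD π (π h x) y + beta BD π x (π h y) := by
  ext a
  calc BH ⁅h, ellInv BH hBH (beta BD π x y)⁆ a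
      = - BD (π ⁅h, a⁆ x) y := by rw [hBHinv, apply_ellInv, beta_apply]
    _ = - BD (π h (π a x)) y + BD (π a (π h x)) y := by
        rw [rep_lie_apply π hπhom, map_sub, LinearMap.sub_apply]; ring
    _ = BD (π a (π h x)) y + BD (π a x) (π h y) := by rw [hπskew h]; ring

end beta

section tnab

variable (BH : LinearMap.BilinForm ℝ H) (hBH : BH.Nondegenerate)
  (BD : LinearMap.BilinForm ℝ D) (π : H →ₗ[ℝ] D →ₗ[ℝ] D)

omit [FiniteDimensional ℝ D] in
theorem nabG_add_left (a b c : D × Dual ℝ H) :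
    nabG BH hBH BD π (a + b) c = nabG BH hBH BD π a c + nabG BH hBH BD π b c := by
  ext
  · simp only [nabG, Prod.fst_add, Prod.snd_add, ellInv_add, add_lie, map_add,
      LinearMap.add_apply]
    module
  · simp only [nabG, Prod.fst_add, Prod.snd_add, beta_add_left, smul_add]

omit [FiniteDimensional ℝ D] in
theorem nabG_add_right (a b c : D × Dual ℝ H) :
    nabG BH hBH BD π a (b + c) = nabG BH hBH BD π a b + nabG BH hBH BD π a c := by
  ext
  · simp only [nabG, Prod.fst_add, Prod.snd_add, ellInv_add, lie_add, map_add,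
      LinearMap.add_apply]
    module
  · simp only [nabG, Prod.fst_add, Prod.snd_add, beta_add_right, smul_add]

omit [FiniteDimensional ℝ D] in
noncomputable def tnabHom (w : D × Dual ℝ H) : (D × Dual ℝ H) →+ D × Dual ℝ H :=
  AddMonoidHom.mk' (tnab BH hBH π w) fun u v => by
    ext <;> simp [tnab, ellInv_add, lie_add]

omit [FiniteDimensional ℝ D] in
theorem tnab_isDerivationOf_gbr (hBHinv : ∀ a b c : H, BH ⁅a, b⁆ c = - BH b ⁅a, c⁆)
    (hπder : ∀ a : H, ∀ x y : D, π a ⁅x, y⁆ = ⁅π a x, y⁆ + ⁅x, π a y⁆)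
    (hπhom : ∀ a b : H, π ⁅a, b⁆ = π a ∘ₗ π b - π b ∘ₗ π a)
    (hπskew : ∀ a : H, ∀ x y : D, BD (π a x) y = - BD x (π a y))
    (w : D × Dual ℝ H) :
    IsDerivationOf (tnabHom BH hBH π w) (gbr BD π) := by
  intro u v
  refine Prod.ext ?_ ?_
  · exact hπder _ u.1 v.1
  · exact beta_equivariant BD π BH hBH hBHinv hπhom hπskew _ u.1 v.1

omit [FiniteDimensional ℝ D] in
theorem tnab_isDerivationOf_nabG (hBHinv : ∀ a b c : H, BH ⁅a, b⁆ c = - BH b ⁅a, c⁆)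
    (hπder : ∀ a : H, ∀ x y : D, π a ⁅x, y⁆ = ⁅π a x, y⁆ + ⁅x, π a y⁆)
    (hπhom : ∀ a b : H, π ⁅a, b⁆ = π a ∘ₗ π b - π b ∘ₗ π a)
    (hπskew : ∀ a : H, ∀ x y : D, BD (π a x) y = - BD x (π a y))
    (w : D × Dual ℝ H) :
    IsDerivationOf (tnabHom BH hBH π w) (nabG BH hBH BD π) := by
  intro u v
  ext
  · simp only [tnabHom, AddMonoidHom.mk'_apply, tnab, nabG, Prod.fst_add, ellInv_apply_self,
      rep_lie_apply π hπhom, map_smul, map_sub, hπder]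
    module
  · simp only [tnabHom, AddMonoidHom.mk'_apply, tnab, nabG, Prod.snd_add, ellInv_smul,
      lie_smul, map_smul, beta_equivariant BD π BH hBH hBHinv hπhom hπskew, smul_add]

end tnab

theorem Rfun_parallel_general
    (BH : LinearMap.BilinForm ℝ H)
    (hBHnd : BH.Nondegenerate)
    (hBHinv : ∀ a b c : H, BH ⁅a, b⁆ c = - BH b ⁅a, c⁆)
    (BD : LinearMap.BilinForm ℝ D)
    (π : H →ₗ[ℝ] D →ₗ[ℝ] D)
    (hπder : ∀ a : H, ∀ x y : D, π a ⁅x, y⁆ = ⁅π a x, y⁆ + ⁅x, π a y⁆)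
    (hπhom : ∀ a b : H, π ⁅a, b⁆ = π a ∘ₗ π b - π b ∘ₗ π a)
    (hπskew : ∀ a : H, ∀ x y : D, BD (π a x) y = - BD x (π a y)) :
    ∀ w w₁ w₂ w₃ : D × Dual ℝ H,
      tnab BH hBHnd π w (Rfun BH hBHnd BD π w₁ w₂ w₃)
        - Rfun BH hBHnd BD π (tnab BH hBHnd π w w₁) w₂ w₃
        - Rfun BH hBHnd BD π w₁ (tnab BH hBHnd π w w₂) w₃
        - Rfun BH hBHnd BD π w₁ w₂ (tnab BH hBHnd π w w₃) = 0 := by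
  intro w w₁ w₂ w₃
  have hR := map_curvature_of_isDerivationOf (nabG_add_left BH hBHnd BD π)
    (nabG_add_right BH hBHnd BD π)
    (tnab_isDerivationOf_nabG BH hBHnd BD π hBHinv hπder hπhom hπskew w)
    (tnab_isDerivationOf_gbr BH hBHnd BD π hBHinv hπder hπhom hπskew w) w₁ w₂ w₃
  rw [sub_sub, sub_sub, ← add_assoc, sub_eq_zero]
  exact hR

/-- The curvature `R` is parallel for `∇̃`: `∇̃R = 0`. -/
theorem Rfun_parallel
    (BH : LinearMap.BilinForm ℝ H)
    (hBHsymm : ∀ a b : H, BH a b = BH b a)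
    (hBHnd : BH.Nondegenerate)
    (hBHinv : ∀ a b c : H, BH ⁅a, b⁆ c = - BH b ⁅a, c⁆)
    (BD : LinearMap.BilinForm ℝ D)
    (hBDsymm : ∀ x y : D, BD x y = BD y x)
    (hBDnd : BD.Nondegenerate)
    (hBDinv : ∀ x y z : D, BD ⁅x, y⁆ z = - BD y ⁅x, z⁆)
    (π : H →ₗ[ℝ] D →ₗ[ℝ] D)
    (hπder : ∀ a : H, ∀ x y : D, π a ⁅x, y⁆ = ⁅π a x, y⁆ + ⁅x, π a y⁆)
    (hπhom : ∀ a b : H, π ⁅a, b⁆ = π a ∘ₗ π b - π b ∘ₗ π a)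
    (hπskew : ∀ a : H, ∀ x y : D, BD (π a x) y = - BD x (π a y)) :
    ∀ w w₁ w₂ w₃ : D × Dual ℝ H,
      tnab BH hBHnd π w (Rfun BH hBHnd BD π w₁ w₂ w₃)
        - Rfun BH hBHnd BD π (tnab BH hBHnd π w w₁) w₂ w₃
        - Rfun BH hBHnd BD π w₁ (tnab BH hBHnd π w w₂) w₃
        - Rfun BH hBHnd BD π w₁ w₂ (tnab BH hBHnd π w w₃) = 0 :=
  Rfun_parallel_general BH hBHnd hBHinv BD π hπder hπhom hπskew
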